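/- Let m and d be positive integers and let w : ZMod m → Fin d be a word of length m over d letters. Then there exists a unique positive divisor s of m such that w factors as w = v ∘ π, where π : ZMod m → ZMod s is the canonical reduction map and v : ZMod s → Fin d is an aperiodic word of length s; moreover for this s the word v is uniquely determined by w. (This is the decomposition of words by their exact period s, which underlies the splitting of the cyclic bar construction B^cy(Π) by cyclic words.) -/
import Mathlib


/-- Rotation of a word of length `s` over `d` letters by `k`. -/
def rot {s d : ℕ} (k : ZMod s) (w : ZMod s → Fin d) : ZMod s → Fin d :=
  fun i => w (i + k)

/-- A word is aperiodic (has period exactly `s`) if its stabilizer under rotation is trivial. -/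
def Aperiodic {s d : ℕ} (w : ZMod s → Fin d) : Prop :=
  ∀ k : ZMod s, rot k w = w → k = 0

theorem word_decomposition_by_period (m d : ℕ) (hm : 0 < m) (hd : 0 < d)
    (w : ZMod m → Fin d) :
    ∃! s : ℕ, 0 < s ∧ ∃ hs : s ∣ m, ∃! v : ZMod s → Fin d,
      Aperiodic v ∧ w = v ∘ (ZMod.castHom hs (ZMod s)) := by
  haveI : NeZero m := ⟨hm.ne'⟩
  -- The subgroup of integer periods of `w`.
  set K : AddSubgroup ℤ :=
    { carrier := {n : ℤ | ∀ i : ZMod m, w (i + (n : ZMod m)) = w i}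
      zero_mem' := by intro i; simp
      add_mem' := by
        intro a b ha hb i
        have : ((a + b : ℤ) : ZMod m) = (a : ZMod m) + b := by push_cast; ring
        rw [this, ← add_assoc, hb, ha]
      neg_mem' := by
        intro a ha i
        have h := ha (i + ((-a : ℤ) : ZMod m))
        have h2 : ((-a : ℤ) : ZMod m) + (a : ZMod m) = 0 := by push_cast; ring
        rw [add_assoc, h2, add_zero] at h
        exact h.symm } with hKdef
  obtain ⟨g, hg⟩ := Int.subgroup_cyclic K
  set s : ℕ := g.natAbs with hs_def
  have hmemK : ∀ n : ℤ, n ∈ K ↔ (s : ℤ) ∣ n := by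
    intro n
    rw [hg, AddSubgroup.mem_closure_singleton]
    simp only [smul_eq_mul]
    constructor
    · rintro ⟨k, rfl⟩
      exact Int.natAbs_dvd.mpr (dvd_mul_left g k)
    · intro h
      obtain ⟨k, rfl⟩ := Int.natAbs_dvd.mp h
      exact ⟨k, mul_comm k g⟩
  have hP : ∀ n : ℕ, (∀ i : ZMod m, w (i + (n : ZMod m)) = w i) ↔ s ∣ n := by
    intro n
    have := hmemK (n : ℤ)
    simp only [hKdef, AddSubgroup.mem_mk, Set.mem_setOf_eq] at this
    rw [← Int.natCast_dvd_natCast]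
    rw [← this]
    constructor <;> intro h i <;> have := h i <;> push_cast at this ⊢ <;> exact this
  have hmK : (m : ℕ) ∈ {n : ℕ | ∀ i : ZMod m, w (i + (n : ZMod m)) = w i} := by
    intro i; simp [ZMod.natCast_self]
  have hsm : s ∣ m := (hP m).mp hmK
  have hspos : 0 < s := by
    rcases Nat.eq_zero_or_pos s with h0 | h
    · exfalso
      rw [h0] at hsm
      exact hm.ne' (Nat.eq_zero_of_zero_dvd hsm)
    · exact h
  haveI : NeZero s := ⟨hspos.ne'⟩
  -- the quotient word
  set v : ZMod s → Fin d := fun j => w ((j.val : ZMod m)) with hv_def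
  have hπval : ∀ x : ZMod m, (ZMod.castHom hsm (ZMod s)) x = ((x.val % s : ℕ) : ZMod s) := by
    intro x
    conv_lhs => rw [← ZMod.natCast_rightInverse x]
    rw [map_natCast]
    conv_lhs => rw [← Nat.mod_add_div x.val s]
    push_cast
    simp [ZMod.natCast_self]
  have hfac : ∀ x : ZMod m, w x = v ((ZMod.castHom hsm (ZMod s)) x) := by
    intro x
    have hvval : ((((x.val % s : ℕ) : ZMod s)).val) = x.val % s :=
      by rw [ZMod.val_natCast, Nat.mod_mod_of_dvd _ dvd_rfl]
    have hx : x = ((x.val % s : ℕ) : ZMod m) + ((s * (x.val / s) : ℕ) : ZMod m) := by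
      conv_lhs => rw [← ZMod.natCast_rightInverse x]
      rw [← Nat.cast_add, Nat.mod_add_div]
    rw [hπval x]
    show w x = w ((((x.val % s : ℕ) : ZMod s)).val : ZMod m)
    rw [hvval]
    conv_lhs => rw [hx]
    exact (hP (s * (x.val / s))).mpr ⟨_, rfl⟩ _
  have hwv : w = v ∘ (ZMod.castHom hsm (ZMod s)) := funext hfac
  have hπsurj : Function.Surjective (ZMod.castHom hsm (ZMod s)) := by
    intro j
    refine ⟨((j.val : ℕ) : ZMod m), ?_⟩
    rw [map_natCast]
    exact ZMod.natCast_rightInverse j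
  have hvap : Aperiodic v := by
    intro k hk
    have hkK : (∀ i : ZMod m, w (i + ((k.val : ℕ) : ZMod m)) = w i) := by
      intro i
      rw [hfac (i + (k.val : ZMod m)), hfac i, map_add, map_natCast]
      rw [ZMod.natCast_rightInverse k]
      exact congrFun hk _
    have : s ∣ k.val := (hP k.val).mp hkK
    have hlt : k.val < s := ZMod.val_lt k
    have h0 : k.val = 0 := Nat.eq_zero_of_dvd_of_lt this hlt
    exact (ZMod.val_eq_zero k).mp h0
  refine ⟨s, ⟨hspos, hsm, v, ⟨hvap, hwv⟩, ?_⟩, ?_⟩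
  · -- uniqueness of v
    rintro v' ⟨_, hfac'⟩
    funext j
    obtain ⟨x, rfl⟩ := hπsurj j
    have := congrFun hfac' x
    have h2 := congrFun hwv x
    simp only [Function.comp_apply] at this h2
    rw [← this, h2]
  · -- uniqueness of s
    rintro s' ⟨hs'pos, hs'm, v', ⟨hv'ap, hv'fac⟩, _⟩
    haveI : NeZero s' := ⟨hs'pos.ne'⟩
    set π' := ZMod.castHom hs'm (ZMod s') with hπ'
    -- s ∣ s'
    have hss' : s ∣ s' := by
      apply (hP s').mp
      intro i
      have h1 := congrFun hv'fac (i + (s' : ZMod m))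
      have h2 := congrFun hv'fac i
      simp only [Function.comp_apply] at h1 h2
      rw [h1, h2, map_add, map_natCast, ZMod.natCast_self, add_zero]
    -- factor v through ZMod s'
    set π'' := ZMod.castHom hss' (ZMod s) with hπ''
    have hπ'surj : Function.Surjective π' := by
      intro j
      refine ⟨((j.val : ℕ) : ZMod m), ?_⟩
      rw [hπ', map_natCast]
      exact ZMod.natCast_rightInverse j
    have hcomp : ∀ x : ZMod m, π'' (π' x) = (ZMod.castHom hsm (ZMod s)) x := by
      intro x
      obtain ⟨n, rfl⟩ : ∃ n : ℕ, (n : ZMod m) = x := ⟨x.val, ZMod.natCast_rightInverse x⟩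
      simp [map_natCast]
    have hv'eq : v' = v ∘ π'' := by
      funext j
      obtain ⟨x, rfl⟩ := hπ'surj j
      have h1 := congrFun hv'fac x
      have h2 := hfac x
      simp only [Function.comp_apply] at h1 ⊢
      rw [← h1, h2, hcomp]
    -- s' ∣ s
    have hs's : s' ∣ s := by
      rw [← ZMod.natCast_eq_zero_iff]
      apply hv'ap
      funext i
      simp only [rot, hv'eq, Function.comp_apply]
      rw [map_add, map_natCast, ZMod.natCast_self, add_zero]
    exact Nat.dvd_antisymm hs's hss'
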